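/- arXiv:1701.06024 — 2 statements merged into one kernel-verified Lean document; each statement's English description precedes it below -/
import Mathlib

section
/- Let f_1, ..., f_m be real polynomials with n = max_i deg f_i, write f_i(t) = Σ_{j=0}^n a_{ij} t^j, and for fixed real numbers λ_1, ..., λ_m set Φ(t) = Σ_i λ_i f_i(e^t). Then there exist real numbers α_1, ..., α_n such that Φ(t) = Σ_i λ_i f_i(0) + Σ_{k=1}^n α_k Φ^{(k)}(t) for all t, where Φ^{(k)} denotes the k-th derivative of Φ. -/
/-!
Write `Φ = g ∘ exp` with `g = Σ λᵢ fᵢ`, a polynomial of degree `≤ n`. Differentiating in `t`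
acts on `g` as the Euler operator `θ = X · d/dX`, which multiplies the coefficient of `Xʲ`
by `j`. Take `Q` with `Q(0) = 0` and `Q(j) = 1` for `1 ≤ j ≤ n`, of degree `≤ n`; then
`Q(θ) g = g - g(0)`, and the `α_k` are the coefficients of `Q`.
-/

open Polynomial Finset

namespace Polynomial

theorem eval_eq_coeff_zero_add_sum_Icc {R : Type*} [CommSemiring R] {p : R[X]} {n : ℕ}
    (hp : p.natDegree ≤ n) (x : R) :
    p.eval x = p.coeff 0 + ∑ k ∈ Icc 1 n, p.coeff k * x ^ k := by
  rw [eval_eq_sum_range' (Nat.lt_succ_of_le hp),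
    ← sum_range_add_sum_Ico _ (by omega : 1 ≤ n + 1), sum_range_one, Ico_add_one_right_eq_Icc,
    pow_zero, mul_one]

theorem exists_natDegree_le_eval_zero_eq_zero_eval_eq_one {K : Type*} [Field K] (s : Finset K)
    (hs : (0 : K) ∉ s) :
    ∃ Q : K[X], Q.natDegree ≤ s.card ∧ Q.eval 0 = 0 ∧ ∀ x ∈ s, Q.eval x = 1 := by
  refine ⟨1 - ∏ x ∈ s, (1 - C x⁻¹ * X), ?_, by simp [eval_prod], fun x hx => ?_⟩
  · refine (natDegree_sub_le _ _).trans (max_le (by simp) ?_)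
    refine (natDegree_prod_le _ _).trans ?_
    refine (sum_le_sum (g := fun _ => 1) fun x _ => ?_).trans (by simp)
    compute_degree
  · rw [eval_sub, eval_one, eval_prod, prod_eq_zero hx]
    · simp
    · simp [inv_mul_cancel₀ (ne_of_mem_of_not_mem hx hs)]

section EulerOp

variable {R : Type*} [CommSemiring R]

noncomputable def eulerOp (p : R[X]) : R[X] := X * derivative p

theorem coeff_eulerOp (p : R[X]) (j : ℕ) : (eulerOp p).coeff j = j * p.coeff j := by
  cases j with
  | zero => simp [eulerOp]
  | succ j => rw [eulerOp, coeff_X_mul, coeff_derivative, mul_comm]; push_cast; rfl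

theorem coeff_iterate_eulerOp (p : R[X]) (k j : ℕ) :
    (eulerOp^[k] p).coeff j = (j : R) ^ k * p.coeff j := by
  induction k with
  | zero => simp
  | succ k ih => rw [Function.iterate_succ_apply', coeff_eulerOp, ih, pow_succ', mul_assoc]

theorem C_coeff_zero_add_sum_smul_iterate_eulerOp {Q p : R[X]} {n : ℕ}
    (hQ : Q.natDegree ≤ n) (hQ0 : Q.eval 0 = 0) (hQ1 : ∀ j ∈ Icc 1 n, Q.eval (j : R) = 1)
    (hp : p.natDegree ≤ n) :
    C (p.coeff 0) + ∑ k ∈ Icc 1 n, Q.coeff k • eulerOp^[k] p = p := by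
  ext j
  have hsum : ∑ k ∈ Icc 1 n, Q.coeff k * ((j : R) ^ k * p.coeff j) =
      Q.eval (j : R) * p.coeff j := by
    rw [eval_eq_coeff_zero_add_sum_Icc hQ, coeff_zero_eq_eval_zero, hQ0, zero_add, sum_mul]
    exact sum_congr rfl fun k _ => (mul_assoc _ _ _).symm
  simp only [coeff_add, coeff_C, finsetSum_coeff, coeff_smul, coeff_iterate_eulerOp, smul_eq_mul,
    hsum]
  rcases Nat.eq_zero_or_pos j with rfl | hj
  · simp [hQ0]
  · rw [if_neg hj.ne', zero_add]
    by_cases hjn : j ≤ n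
    · rw [hQ1 j (mem_Icc.2 ⟨hj, hjn⟩), one_mul]
    · rw [coeff_eq_zero_of_natDegree_lt (by omega), mul_zero]

end EulerOp

theorem hasDerivAt_eval_exp (p : ℝ[X]) (t : ℝ) :
    HasDerivAt (fun t => p.eval (Real.exp t)) ((eulerOp p).eval (Real.exp t)) t := by
  rw [eulerOp, eval_mul, eval_X, mul_comm]
  exact (p.hasDerivAt _).comp t (Real.hasDerivAt_exp t)

theorem iteratedDeriv_eval_exp (p : ℝ[X]) (k : ℕ) :
    iteratedDeriv k (fun t => p.eval (Real.exp t)) =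
      fun t => (eulerOp^[k] p).eval (Real.exp t) := by
  induction k generalizing p with
  | zero => rfl
  | succ k ih =>
    have hderiv : deriv (fun t => p.eval (Real.exp t)) =
        fun t => (eulerOp p).eval (Real.exp t) := by
      ext t
      exact (hasDerivAt_eval_exp p t).deriv
    rw [iteratedDeriv_succ', hderiv, ih, Function.iterate_succ_apply]

end Polynomial

/-- For real polynomials `f_1, ..., f_m` with `n = max deg f_i` and
`Φ(t) = Σ λ_i f_i(e^t)`, there are reals `α_1, ..., α_n` with
`Φ(t) = Σ λ_i f_i(0) + Σ_{k=1}^n α_k Φ^{(k)}(t)` for all `t`. -/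
theorem stmt2 (m : ℕ) (f : Fin m → Polynomial ℝ) (n : ℕ)
    (hn : n = Finset.univ.sup fun i => (f i).natDegree)
    (lam : Fin m → ℝ) :
    ∃ α : ℕ → ℝ, ∀ t : ℝ,
      (∑ i, lam i * (f i).eval (Real.exp t)) =
        (∑ i, lam i * (f i).eval 0) +
        ∑ k ∈ Finset.Icc 1 n,
          α k * iteratedDeriv k (fun t => ∑ i, lam i * (f i).eval (Real.exp t)) t := by
  set g := ∑ i, lam i • f i
  have hΦ (t : ℝ) : ∑ i, lam i * (f i).eval (Real.exp t) = g.eval (Real.exp t) := by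
    simp [g, eval_finsetSum]
  have hg0 : ∑ i, lam i * (f i).eval 0 = g.coeff 0 := by
    simp [g, coeff_zero_eq_eval_zero, eval_finsetSum]
  have hg : g.natDegree ≤ n := natDegree_sum_le_of_forall_le _ _ fun i _ =>
    (natDegree_smul_le _ _).trans (hn ▸ le_sup (f := fun i => (f i).natDegree) (mem_univ i))
  obtain ⟨Q, hQ, hQ0, hQ1⟩ := exists_natDegree_le_eval_zero_eq_zero_eval_eq_one
    ((Icc 1 n).image ((↑) : ℕ → ℝ)) (by simp)
  rw [card_image_of_injective _ Nat.cast_injective, Nat.card_Icc, Nat.add_sub_cancel] at hQ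
  refine ⟨Q.coeff, fun t => ?_⟩
  have key := congrArg (eval (Real.exp t)) <| C_coeff_zero_add_sum_smul_iterate_eulerOp hQ hQ0
    (fun j hj => hQ1 _ (mem_image_of_mem _ hj)) hg
  simp only [hΦ, iteratedDeriv_eval_exp, hg0]
  simpa [eval_finsetSum] using key.symm
end

section
/- Let A : L²(V) → L²(V) be a nonzero bounded self-adjoint operator on L² of a probability space, and suppose V can be partitioned into finitely many measurable independent sets for A, with χ(A) the least such number. Then χ(A) ≥ 1 − M(A)/m(A), where m(A) and M(A) are the infimum and supremum of ⟨Af, f⟩ over unit vectors f; in particular m(A) < 0 and M(A) > 0. -/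
open MeasureTheory
open scoped RealInnerProductSpace

/-!
Split every `f ∈ L²` along the partition, `f = ∑ fᵢ` with `fᵢ = 1_{Iᵢ} f`: the pieces are pairwise
orthogonal and `⟪A fᵢ, fᵢ⟫ = 0` by independence. Testing `m ‖g‖² ≤ ⟪A g, g⟫` on the `k` vectors
`g = k fᵢ - f` and summing gives `m k (k - 1) ‖f‖² ≤ -k ⟪A f, f⟫`, i.e.
`⟪A f, f⟫ ≤ m (1 - k) ‖f‖²`, whence `M ≤ m (1 - k)`.
If `m ≥ 0`, then `A` is positive, and a positive operator kills every `x` with `⟪A x, x⟫ = 0`;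
so `A` kills every piece, hence `A = 0`. The same argument for `-A` gives `M > 0`.
-/
namespace MeasureTheory.Lp

variable {α E : Type*} {m : MeasurableSpace α} {μ : Measure α} [NormedAddCommGroup E]
  {p : ENNReal}

noncomputable def indicator {s : Set α} (hs : MeasurableSet s) (f : Lp E p μ) : Lp E p μ :=
  ((Lp.memLp f).indicator hs).toLp (s.indicator f)

theorem coeFn_indicator {s : Set α} (hs : MeasurableSet s) (f : Lp E p μ) :
    ⇑(indicator hs f) =ᵐ[μ] s.indicator f :=
  MemLp.coeFn_toLp _

theorem ae_indicator_eq_zero_of_notMem {s : Set α} (hs : MeasurableSet s) (f : Lp E p μ) :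
    ∀ᵐ x ∂μ, x ∉ s → indicator hs f x = 0 := by
  filter_upwards [coeFn_indicator hs f] with x hx hxs
  rw [hx, Set.indicator_of_notMem hxs]

theorem sum_indicator_eq_self {ι : Type*} [Fintype ι] {I : ι → Set α}
    (hI : ∀ i, MeasurableSet (I i)) (hdisj : Pairwise (Function.onFun Disjoint I))
    (hcover : ⋃ i, I i = Set.univ) (f : Lp E p μ) :
    ∑ i, indicator (hI i) f = f := by
  apply Lp.ext
  filter_upwards [Lp.coeFn_finsetSum Finset.univ fun i => indicator (hI i) f,
    ae_all_iff.mpr fun i => coeFn_indicator (hI i) f] with x hsum hpiece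
  rw [hsum, Finset.sum_apply, Finset.sum_congr rfl fun i _ => hpiece i,
    ← Finset.indicator_biUnion_apply _ _ fun i _ j _ hij => hdisj hij]
  simp [hcover]

theorem inner_indicator_eq_zero_of_disjoint {𝕜 : Type*} [RCLike 𝕜] [InnerProductSpace 𝕜 E]
    {s t : Set α} (hs : MeasurableSet s) (ht : MeasurableSet t) (hst : Disjoint s t)
    (f g : Lp E 2 μ) : inner 𝕜 (indicator hs f) (indicator ht g) = 0 := by
  rw [L2.inner_def]
  refine integral_eq_zero_of_ae ?_
  filter_upwards [coeFn_indicator hs f, coeFn_indicator ht g] with x hf hg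
  rw [hf, hg, Pi.zero_apply]
  by_cases hxs : x ∈ s
  · rw [Set.indicator_of_notMem (Set.disjoint_left.mp hst hxs), inner_zero_right]
  · rw [Set.indicator_of_notMem hxs, inner_zero_left]

end MeasureTheory.Lp

section RealInnerProductSpace

variable {E : Type*} [NormedAddCommGroup E] [InnerProductSpace ℝ E]

theorem inner_map_self_div_norm_sq_mem (T : E →ₗ[ℝ] E) {g : E} (hg : g ≠ 0) :
    ⟪T g, g⟫ / ‖g‖ ^ 2 ∈ {r : ℝ | ∃ f : E, ‖f‖ = 1 ∧ ⟪T f, f⟫ = r} := by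
  refine ⟨‖g‖⁻¹ • g, ?_, ?_⟩
  · rw [norm_smul, norm_inv, norm_norm, inv_mul_cancel₀ (norm_ne_zero_iff.mpr hg)]
  · rw [map_smul, real_inner_smul_left, real_inner_smul_right]
    field_simp

theorem mul_norm_sq_le_inner_map_self {T : E →ₗ[ℝ] E} {m : ℝ}
    (hm : m ∈ lowerBounds {r : ℝ | ∃ f : E, ‖f‖ = 1 ∧ ⟪T f, f⟫ = r}) (g : E) :
    m * ‖g‖ ^ 2 ≤ ⟪T g, g⟫ := by
  rcases eq_or_ne g 0 with rfl | hg
  · simp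
  have hpos : 0 < ‖g‖ ^ 2 := by positivity
  exact (le_div_iff₀ hpos).mp (hm (inner_map_self_div_norm_sq_mem T hg))

theorem inner_map_self_le_mul_norm_sq {T : E →ₗ[ℝ] E} {M : ℝ}
    (hM : M ∈ upperBounds {r : ℝ | ∃ f : E, ‖f‖ = 1 ∧ ⟪T f, f⟫ = r}) (g : E) :
    ⟪T g, g⟫ ≤ M * ‖g‖ ^ 2 := by
  rcases eq_or_ne g 0 with rfl | hg
  · simp
  have hpos : 0 < ‖g‖ ^ 2 := by positivity
  exact (div_le_iff₀ hpos).mp (hM (inner_map_self_div_norm_sq_mem T hg))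

theorem LinearMap.IsPositive.apply_eq_zero_of_inner_map_self_eq_zero {T : E →ₗ[ℝ] E}
    (hT : T.IsPositive) {x : E} (hx : ⟪T x, x⟫ = 0) : T x = 0 := by
  have horth : ∀ y, ⟪T x, y⟫ = 0 := by
    intro y
    -- the quadratic `t ↦ ⟪T (x + t y), x + t y⟫` is nonnegative and has no constant term
    have hquad : ∀ t : ℝ, 0 ≤ ⟪T y, y⟫ * (t * t) + 2 * ⟪T x, y⟫ * t + ⟪T x, x⟫ := by
      intro t
      have := hT.inner_nonneg_left (x + t • y)
      have hsymm : ⟪T y, x⟫ = ⟪T x, y⟫ := by rw [hT.isSymmetric, real_inner_comm]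
      rw [map_add, map_smul, inner_add_left, inner_add_right, inner_add_right,
        real_inner_smul_left, real_inner_smul_right, real_inner_smul_left, real_inner_smul_right,
        hsymm] at this
      linarith
    have := discrim_le_zero hquad
    rw [discrim, hx] at this
    nlinarith [sq_nonneg ⟪T x, y⟫]
  exact inner_self_eq_zero.mp (horth (T x))

variable {ι : Type*} [Fintype ι]

theorem LinearMap.IsPositive.eq_zero_of_isotropic_decomposition {T : E →ₗ[ℝ] E}
    (hT : T.IsPositive) (piece : E → ι → E) (hsum : ∀ f, ∑ i, piece f i = f)
    (hiso : ∀ f i, ⟪T (piece f i), piece f i⟫ = 0) : T = 0 := by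
  ext f
  rw [← hsum f, map_sum]
  simp [hT.apply_eq_zero_of_inner_map_self_eq_zero (hiso f _)]

theorem inner_sum_eq_norm_sq_of_orthogonal {p : ι → E}
    (horth : Pairwise fun i j => ⟪p i, p j⟫ = 0) (i : ι) :
    ⟪p i, ∑ j, p j⟫ = ‖p i‖ ^ 2 := by
  rw [inner_sum, Finset.sum_eq_single i (fun j _ hji => horth hji.symm) (by simp),
    real_inner_self_eq_norm_sq]

theorem sum_norm_sq_card_smul_sub_sum {p : ι → E}
    (horth : Pairwise fun i j => ⟪p i, p j⟫ = 0) :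
    ∑ i, ‖(Fintype.card ι : ℝ) • p i - ∑ j, p j‖ ^ 2
      = Fintype.card ι * (Fintype.card ι - 1) * ‖∑ j, p j‖ ^ 2 := by
  have hpyth : ∑ i, ‖p i‖ ^ 2 = ‖∑ j, p j‖ ^ 2 := by
    rw [← real_inner_self_eq_norm_sq, sum_inner]
    exact Finset.sum_congr rfl fun i _ => (inner_sum_eq_norm_sq_of_orthogonal horth i).symm
  have hexpand : ∀ i, ‖(Fintype.card ι : ℝ) • p i - ∑ j, p j‖ ^ 2
      = ((Fintype.card ι : ℝ) ^ 2 - 2 * Fintype.card ι) * ‖p i‖ ^ 2 + ‖∑ j, p j‖ ^ 2 := by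
    intro i
    rw [norm_sub_sq_real, norm_smul, real_inner_smul_left,
      inner_sum_eq_norm_sq_of_orthogonal horth, Real.norm_natCast]
    ring
  rw [Finset.sum_congr rfl fun i _ => hexpand i, Finset.sum_add_distrib, ← Finset.mul_sum, hpyth,
    Finset.sum_const, Finset.card_univ, nsmul_eq_mul]
  ring

theorem LinearMap.IsSymmetric.sum_inner_map_card_smul_sub_sum {T : E →ₗ[ℝ] E}
    (hT : T.IsSymmetric) {p : ι → E} (hiso : ∀ i, ⟪T (p i), p i⟫ = 0) :
    ∑ i, ⟪T ((Fintype.card ι : ℝ) • p i - ∑ j, p j), (Fintype.card ι : ℝ) • p i - ∑ j, p j⟫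
      = -(Fintype.card ι * ⟪T (∑ j, p j), ∑ j, p j⟫) := by
  set f := ∑ j, p j
  have hexpand : ∀ i, ⟪T ((Fintype.card ι : ℝ) • p i - f), (Fintype.card ι : ℝ) • p i - f⟫
      = ⟪T f, f⟫ - 2 * Fintype.card ι * ⟪T f, p i⟫ := by
    intro i
    rw [map_sub, map_smul, inner_sub_left, inner_sub_right, inner_sub_right, real_inner_smul_left,
      real_inner_smul_left, real_inner_smul_right, real_inner_smul_right, hiso, hT (p i) f,
      real_inner_comm (p i)]
    ring
  rw [Finset.sum_congr rfl fun i _ => hexpand i, Finset.sum_sub_distrib, Finset.sum_const,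
    Finset.card_univ, nsmul_eq_mul, ← Finset.mul_sum, ← inner_sum]
  ring

theorem LinearMap.IsSymmetric.inner_map_sum_self_le {T : E →ₗ[ℝ] E} (hT : T.IsSymmetric)
    {m : ℝ} (hm : ∀ g, m * ‖g‖ ^ 2 ≤ ⟪T g, g⟫) {p : ι → E}
    (horth : Pairwise fun i j => ⟪p i, p j⟫ = 0) (hiso : ∀ i, ⟪T (p i), p i⟫ = 0) :
    ⟪T (∑ i, p i), ∑ i, p i⟫ ≤ m * (1 - Fintype.card ι) * ‖∑ i, p i‖ ^ 2 := by
  rcases isEmpty_or_nonempty ι with _ | _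
  · simp
  have hk : (0 : ℝ) < Fintype.card ι := by exact_mod_cast Fintype.card_pos
  have hsum := Finset.sum_le_sum fun i (_ : i ∈ Finset.univ) =>
    hm ((Fintype.card ι : ℝ) • p i - ∑ j, p j)
  rw [← Finset.mul_sum, sum_norm_sq_card_smul_sub_sum horth,
    hT.sum_inner_map_card_smul_sub_sum hiso] at hsum
  nlinarith

end RealInnerProductSpace

theorem stmt13_general {V : Type*} [MeasurableSpace V] (ν : Measure V)
    (A : Lp ℝ 2 ν →L[ℝ] Lp ℝ 2 ν) (hA0 : A ≠ 0)
    (hsa : ∀ f g : Lp ℝ 2 ν, ⟪A f, g⟫ = ⟪f, A g⟫)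
    (mA MA : ℝ)
    (hm : IsGLB {r : ℝ | ∃ f : Lp ℝ 2 ν, ‖f‖ = 1 ∧ ⟪A f, f⟫ = r} mA)
    (hM : IsLUB {r : ℝ | ∃ f : Lp ℝ 2 ν, ‖f‖ = 1 ∧ ⟪A f, f⟫ = r} MA)
    (k : ℕ) (I : Fin k → Set V)
    (hmeas : ∀ i, MeasurableSet (I i))
    (hdisj : Pairwise (Function.onFun Disjoint I))
    (hcover : (⋃ i, I i) = Set.univ)
    (hind : ∀ i, ∀ f : Lp ℝ 2 ν, (∀ᵐ x ∂ν, x ∉ I i → f x = 0) → ⟪A f, f⟫ = 0) :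
    mA < 0 ∧ 0 < MA ∧ 1 - MA / mA ≤ (k : ℝ) := by
  have hT : (A : Lp ℝ 2 ν →ₗ[ℝ] Lp ℝ 2 ν).IsSymmetric := hsa
  let piece (f : Lp ℝ 2 ν) (i : Fin k) : Lp ℝ 2 ν := Lp.indicator (hmeas i) f
  have hsum (f : Lp ℝ 2 ν) : ∑ i, piece f i = f := Lp.sum_indicator_eq_self hmeas hdisj hcover f
  have hiso (f : Lp ℝ 2 ν) (i : Fin k) : ⟪A (piece f i), piece f i⟫ = 0 :=
    hind i _ (Lp.ae_indicator_eq_zero_of_notMem (hmeas i) f)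
  have horth (f : Lp ℝ 2 ν) : Pairwise fun i j => ⟪piece f i, piece f j⟫ = 0 :=
    fun i j hij => Lp.inner_indicator_eq_zero_of_disjoint _ _ (hdisj hij) f f
  have hmA : mA < 0 := by
    by_contra! hnonneg
    refine hA0 (ContinuousLinearMap.coe_inj.mp ?_)
    refine LinearMap.IsPositive.eq_zero_of_isotropic_decomposition ?_ piece hsum hiso
    exact (LinearMap.isPositive_iff _).mpr ⟨hT, fun g =>
      (mul_nonneg hnonneg (sq_nonneg ‖g‖)).trans (mul_norm_sq_le_inner_map_self hm.1 g)⟩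
  have hMA : 0 < MA := by
    by_contra! hnonpos
    refine hA0 (ContinuousLinearMap.coe_inj.mp (neg_eq_zero.mp ?_))
    refine LinearMap.IsPositive.eq_zero_of_isotropic_decomposition ?_ piece hsum
      fun f i => by simp [hiso f i]
    refine (LinearMap.isPositive_iff _).mpr ⟨fun f g => by simp [hsa f g], fun g => ?_⟩
    have := inner_map_self_le_mul_norm_sq hM.1 g
    simp only [LinearMap.neg_apply, inner_neg_left, ContinuousLinearMap.coe_coe] at this ⊢
    nlinarith [sq_nonneg ‖g‖]
  have hMA_le : MA ≤ mA * (1 - k) := hM.2 fun r ⟨f, hf, hr⟩ => by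
    simpa [hr, hsum, hf] using hT.inner_map_sum_self_le (mul_norm_sq_le_inner_map_self hm.1)
      (horth f) (hiso f)
  refine ⟨hmA, hMA, ?_⟩
  rw [sub_le_comm, le_div_iff_of_neg hmA]
  linarith

/-- Operator Hoffman bound for the chromatic number. If `A` is a
nonzero bounded self-adjoint operator on `L²` of a probability space and `V` is
partitioned into `k` measurable independent sets for `A`, then `m(A) < 0`,
`M(A) > 0` and `k ≥ 1 - M(A)/m(A)`, where `m(A)`, `M(A)` are the endpoints of the
numerical range of `A`. -/
theorem stmt13 {V : Type*} [MeasurableSpace V] (ν : Measure V) [IsProbabilityMeasure ν]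
    (A : Lp ℝ 2 ν →L[ℝ] Lp ℝ 2 ν) (hA0 : A ≠ 0)
    (hsa : ∀ f g : Lp ℝ 2 ν, ⟪A f, g⟫ = ⟪f, A g⟫)
    (mA MA : ℝ)
    (hm : IsGLB {r : ℝ | ∃ f : Lp ℝ 2 ν, ‖f‖ = 1 ∧ ⟪A f, f⟫ = r} mA)
    (hM : IsLUB {r : ℝ | ∃ f : Lp ℝ 2 ν, ‖f‖ = 1 ∧ ⟪A f, f⟫ = r} MA)
    (k : ℕ) (I : Fin k → Set V)
    (hmeas : ∀ i, MeasurableSet (I i))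
    (hdisj : Pairwise (Function.onFun Disjoint I))
    (hcover : (⋃ i, I i) = Set.univ)
    (hind : ∀ i, ∀ f : Lp ℝ 2 ν, (∀ᵐ x ∂ν, x ∉ I i → f x = 0) → ⟪A f, f⟫ = 0) :
    mA < 0 ∧ 0 < MA ∧ 1 - MA / mA ≤ (k : ℝ) :=
  stmt13_general ν A hA0 hsa mA MA hm hM k I hmeas hdisj hcover hind
end
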